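/- For n ≥ 2, the commuting graph of the generalized quaternion group Q_{4n} = ⟨x, y : y^{2n} = 1, x^2 = y^n, xyx^{-1} = y^{-1}⟩ is isomorphic to K_{2n-2} ⊔ n·K_2, and its spectrum is {(-1) with multiplicity 3n - 3, 1 with multiplicity n, (2n - 3) with multiplicity 1}. -/

import Mathlib

open Polynomial

/-- The commuting graph of a group: vertices are non-central elements,
adjacent iff distinct and commuting. -/
def commGraph (G : Type*) [Group G] : SimpleGraph {x : G // x ∉ Subgroup.center G} where
  Adj x y := x ≠ y ∧ (x : G) * y = y * x
  symm := by constructor; rintro x y ⟨h1, h2⟩; exact ⟨h1.symm, h2.symm⟩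
  loopless := by constructor; rintro x ⟨h, _⟩; exact h rfl

/-- The characteristic polynomial (over ℝ) of the adjacency matrix of the
commuting graph of a finite group. -/
noncomputable def commCharpoly (G : Type*) [Group G] [Finite G] : Polynomial ℝ := by
  classical
  have : Fintype G := Fintype.ofFinite G
  exact (SimpleGraph.adjMatrix ℝ (commGraph G)).charpoly

/-- The disjoint union of `k` copies of the complete graph on `m` vertices. -/
def completeUnion (k m : ℕ) : SimpleGraph (Fin k × Fin m) where
  Adj x y := x ≠ y ∧ x.1 = y.1
  symm := by constructor; rintro x y ⟨h1, h2⟩; exact ⟨h1.symm, h2.symm⟩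
  loopless := by constructor; rintro x ⟨h, _⟩; exact h rfl

/-!
Write the elements of `Q_{4n}` as rotations `a i` and reflections `xa i` with `i : ZMod (2n)`.
Rotations commute with each other, `a i` commutes with `xa j` only when `2i = 0`, which is exactly
when `a i` is central, and `xa i`, `xa j` commute iff `i ≡ j mod n`. Hence the `2n - 2`
non-central rotations form a clique, no reflection is central, and the reflections split into the
`n` edges `{xa i, xa (i + n)}`. The adjacency matrix is therefore block diagonal with blocks
`J - 1`, and since the all-ones matrix `J` has rank one, `J - 1` on `m` vertices has
characteristic polynomial `(X + 1) ^ (m - 1) * (X - (m - 1))`.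
-/

def sameFiberGraph {V β : Type*} (f : V → β) : SimpleGraph V where
  Adj x y := x ≠ y ∧ f x = f y
  symm := ⟨fun _ _ h => ⟨h.1.symm, h.2.symm⟩⟩
  loopless := ⟨fun _ h => h.1 rfl⟩

theorem sameFiberGraph_iso_completeUnion {V β : Type*} [Finite V] [Finite β] (f : V → β)
    {k m : ℕ} (hβ : Nat.card β = k) (hf : ∀ b, Nat.card {x // f x = b} = m) :
    Nonempty (sameFiberGraph f ≃g completeUnion k m) := by
  let eβ := Finite.equivFinOfCardEq hβ
  let e : V ≃ Fin k × Fin m :=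
    (Equiv.sigmaFiberEquiv f).symm.trans <|
      (Equiv.sigmaCongrRight fun b => Finite.equivFinOfCardEq (hf b)).trans <|
        (Equiv.sigmaEquivProd β (Fin m)).trans <| Equiv.prodCongr eβ (Equiv.refl _)
  have he (x : V) : (e x).1 = eβ (f x) := rfl
  refine ⟨⟨e, fun {x y} => ?_⟩⟩
  simp only [completeUnion, sameFiberGraph, he, e.injective.ne_iff, eβ.injective.eq_iff]

namespace SimpleGraph

variable {R : Type*} [CommRing R]

theorem charpoly_adjMatrix_top (V : Type*) [Fintype V] [DecidableEq V] [Nonempty V] :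
    ((⊤ : SimpleGraph V).adjMatrix R).charpoly =
      (X + 1) ^ (Fintype.card V - 1) * (X - C ((Fintype.card V : R) - 1)) := by
  have hJ : (⊤ : SimpleGraph V).adjMatrix R = Matrix.vecMulVec 1 1 - Matrix.scalar V 1 := by
    ext i j
    by_cases h : i = j <;> simp [h]
  obtain ⟨k, hk⟩ : ∃ k, Fintype.card V = k + 1 :=
    ⟨_, (Nat.succ_pred_eq_of_pos Fintype.card_pos).symm⟩
  rw [hJ, Matrix.charpoly_sub_scalar, Matrix.charpoly_vecMulVec]
  simp [hk, pow_succ, smul_eq_C_mul]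
  ring

theorem adjMatrix_sum {V W : Type*} (G : SimpleGraph V) (H : SimpleGraph W)
    [DecidableRel G.Adj] [DecidableRel H.Adj] [DecidableRel (G ⊕g H).Adj] :
    (G ⊕g H).adjMatrix R = Matrix.fromBlocks (G.adjMatrix R) 0 0 (H.adjMatrix R) := by
  ext (i | i) (j | j) <;> simp [Matrix.fromBlocks]

theorem charpoly_adjMatrix_eq_of_iso {V W : Type*} [Fintype V] [DecidableEq V] [Fintype W]
    [DecidableEq W] {G : SimpleGraph V} {H : SimpleGraph W} [DecidableRel G.Adj]
    [DecidableRel H.Adj] (e : G ≃g H) : (G.adjMatrix R).charpoly = (H.adjMatrix R).charpoly := by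
  rw [← Iso.reindex_adjMatrix R e, Matrix.charpoly_reindex]

end SimpleGraph

theorem charpoly_adjMatrix_completeUnion {R : Type*} [CommRing R] (k m : ℕ) [NeZero m]
    [DecidableRel (completeUnion k m).Adj] :
    ((completeUnion k m).adjMatrix R).charpoly =
      ((X + 1) ^ (m - 1) * (X - C ((m : R) - 1))) ^ k := by
  have hblock : ((completeUnion k m).adjMatrix R).BlockTriangular Prod.fst := by
    intro x y hxy
    rw [SimpleGraph.adjMatrix_apply, if_neg]
    exact fun h => hxy.ne h.2.symm
  have hsq (c : Fin k) : ((completeUnion k m).adjMatrix R).toSquareBlock Prod.fst c =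
      (⊤ : SimpleGraph {x : Fin k × Fin m // x.1 = c}).adjMatrix R := by
    ext ⟨x, hx⟩ ⟨y, hy⟩
    simp only [Matrix.toSquareBlock_def, Matrix.of_apply, SimpleGraph.adjMatrix_apply]
    simp [completeUnion, hx, hy, Subtype.ext_iff]
  have hcharpoly (c : Fin k) :
      (((completeUnion k m).adjMatrix R).toSquareBlock Prod.fst c).charpoly =
        (X + 1) ^ (m - 1) * (X - C ((m : R) - 1)) := by
    have : Nonempty {x : Fin k × Fin m // x.1 = c} := ⟨⟨(c, 0), rfl⟩⟩
    have hcard : Fintype.card {x : Fin k × Fin m // x.1 = c} = m := by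
      simpa using Fintype.card_congr (β := Fin m)
        ⟨fun x => x.1.2, fun b => ⟨(c, b), rfl⟩, by rintro ⟨⟨a, b⟩, rfl⟩; rfl, fun _ => rfl⟩
    rw [hsq, SimpleGraph.charpoly_adjMatrix_top, hcard]
  rw [hblock.charpoly, Finset.image_univ_of_surjective Prod.fst_surjective]
  simp [hcharpoly]

theorem commGraph_adj_iff {G : Type*} [Group G] {x y : {x : G // x ∉ Subgroup.center G}} :
    (commGraph G).Adj x y ↔ x ≠ y ∧ Commute (x : G) y :=
  Iff.rfl

theorem commCharpoly_eq_charpoly_adjMatrix (G : Type*) [Group G] [Finite G]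
    [Fintype {x : G // x ∉ Subgroup.center G}] [DecidableEq {x : G // x ∉ Subgroup.center G}]
    [DecidableRel (commGraph G).Adj] :
    commCharpoly G = ((commGraph G).adjMatrix ℝ).charpoly := by
  unfold commCharpoly
  congr!

theorem AddMonoidHom.card_fiber_mul_card_of_surjective {G H : Type*} [AddGroup G] [AddGroup H]
    {f : G →+ H} (hf : Function.Surjective f) (h : H) :
    Nat.card (f ⁻¹' {h}) * Nat.card H = Nat.card G := by
  rw [Nat.card_congr (f.fiberEquivKerOfSurjective hf h), ← f.ker.card_mul_index,
    AddSubgroup.index_ker, AddMonoidHom.range_eq_top.mpr hf, AddSubgroup.card_top]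

section

variable {n : ℕ}

local notation "π" => ZMod.castHom (n := 2 * n) (dvd_mul_left n 2) (ZMod n)

theorem ZMod.two_mul_eq_zero_iff_castHom_eq_zero (i : ZMod (2 * n)) : 2 * i = 0 ↔ π i = 0 := by
  obtain ⟨k, rfl⟩ := ZMod.intCast_surjective i
  rw [map_intCast, ← Int.cast_ofNat, ← Int.cast_mul, ZMod.intCast_zmod_eq_zero_iff_dvd,
    ZMod.intCast_zmod_eq_zero_iff_dvd, Nat.cast_mul]
  exact Int.mul_dvd_mul_iff_left two_ne_zero

theorem ZMod.card_fiber_castHom [NeZero n] (c : ZMod n) :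
    Nat.card {i : ZMod (2 * n) // π i = c} = 2 := by
  have h := AddMonoidHom.card_fiber_mul_card_of_surjective (f := (π : ZMod (2 * n) →+ ZMod n))
    (ZMod.castHom_surjective (n := 2 * n) (dvd_mul_left n 2)) c
  rw [Nat.card_zmod, Nat.card_zmod] at h
  exact Nat.eq_of_mul_eq_mul_right (Nat.pos_of_neZero n) h

theorem ZMod.card_castHom_ne_zero [NeZero n] :
    Nat.card {i : ZMod (2 * n) // π i ≠ 0} = 2 * n - 2 := by
  have h := Nat.card_congr (Equiv.sumCompl fun i : ZMod (2 * n) => π i = 0)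
  rw [Nat.card_sum, ZMod.card_fiber_castHom, Nat.card_zmod] at h
  simp only [ne_eq]
  omega

namespace QuaternionGroup

theorem commute_a_a (i j : ZMod (2 * n)) : Commute (a i) (a j) := by
  rw [Commute, SemiconjBy, a_mul_a, a_mul_a, add_comm]

theorem commute_a_xa_iff (i j : ZMod (2 * n)) : Commute (a i) (xa j) ↔ π i = 0 := by
  rw [Commute, SemiconjBy, a_mul_xa, xa_mul_a, xa.injEq,
    ← ZMod.two_mul_eq_zero_iff_castHom_eq_zero]
  constructor <;> intro h <;> linear_combination -h

theorem commute_xa_xa_iff (i j : ZMod (2 * n)) : Commute (xa i) (xa j) ↔ π i = π j := by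
  rw [Commute, SemiconjBy, xa_mul_xa, xa_mul_xa, a.injEq, ← sub_eq_zero (a := π i), ← map_sub,
    ← ZMod.two_mul_eq_zero_iff_castHom_eq_zero]
  constructor <;> intro h <;> linear_combination -h

theorem a_mem_center_iff (i : ZMod (2 * n)) :
    a i ∈ Subgroup.center (QuaternionGroup n) ↔ π i = 0 := by
  rw [Subgroup.mem_center_iff]
  refine ⟨fun h => (commute_a_xa_iff i 0).mp (h (xa 0)).symm, fun h g => ?_⟩
  cases g with
  | a j => exact commute_a_a j i
  | xa j => exact ((commute_a_xa_iff i j).mpr h).symm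

theorem xa_notMem_center (hn : 2 ≤ n) (i : ZMod (2 * n)) :
    xa i ∉ Subgroup.center (QuaternionGroup n) := by
  have : Fact (1 < n) := ⟨hn⟩
  rw [Subgroup.mem_center_iff]
  intro h
  have h1 : π 1 = 0 := (commute_a_xa_iff 1 i).mp (h (a 1))
  exact one_ne_zero (map_one π ▸ h1)

def commGraphIso (hn : 2 ≤ n) : commGraph (QuaternionGroup n) ≃g
    (⊤ : SimpleGraph {i : ZMod (2 * n) // π i ≠ 0}) ⊕g sameFiberGraph π where
  toFun
    | ⟨a i, h⟩ => .inl ⟨i, (a_mem_center_iff i).not.mp h⟩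
    | ⟨xa i, _⟩ => .inr i
  invFun
    | .inl ⟨i, h⟩ => ⟨a i, (a_mem_center_iff i).not.mpr h⟩
    | .inr i => ⟨xa i, xa_notMem_center hn i⟩
  left_inv := by rintro ⟨i | i, h⟩ <;> rfl
  right_inv := by rintro (⟨i, h⟩ | i) <;> rfl
  map_rel_iff' := by
    rintro ⟨i | i, hi⟩ ⟨j | j, hj⟩
    · refine SimpleGraph.sum_adj_inl.trans ?_
      rw [SimpleGraph.top_adj, Ne, Subtype.mk.injEq]
      simp [commGraph_adj_iff, commute_a_a]
    · refine iff_of_false (SimpleGraph.not_adj_sum_inl_inr _ _) fun h => hi ?_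
      exact (a_mem_center_iff i).mpr ((commute_a_xa_iff i j).mp h.2)
    · refine iff_of_false (by simp) fun h => hj ?_
      exact (a_mem_center_iff j).mpr ((commute_a_xa_iff j i).mp h.2.symm)
    · refine SimpleGraph.sum_adj_inr.trans ?_
      simp [commGraph_adj_iff, sameFiberGraph, commute_xa_xa_iff]

theorem nonempty_commGraph_iso (hn : 2 ≤ n) :
    Nonempty (commGraph (QuaternionGroup n) ≃g
      (⊤ : SimpleGraph (Fin (2 * n - 2))) ⊕g completeUnion n 2) := by
  have : NeZero n := ⟨by omega⟩
  obtain ⟨eFiber⟩ :=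
    sameFiberGraph_iso_completeUnion π (Nat.card_zmod n) ZMod.card_fiber_castHom
  let eClique := Finite.equivFinOfCardEq (ZMod.card_castHom_ne_zero (n := n))
  exact ⟨(commGraphIso hn).trans ((SimpleGraph.Iso.completeGraph eClique).sumCongr eFiber)⟩

end QuaternionGroup

end

/-- For `n ≥ 2`, the commuting graph of the generalized quaternion group `Q_{4n}` is
isomorphic to `K_{2n-2} ⊔ n·K_2`, and its spectrum is
`{(-1)^{3n-3}, 1^n, (2n-3)^1}`. -/
theorem commGraph_quaternionGroup (n : ℕ) (hn : 2 ≤ n) :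
    haveI : NeZero n := ⟨by omega⟩
    Nonempty (commGraph (QuaternionGroup n) ≃g
        ((⊤ : SimpleGraph (Fin (2 * n - 2))) ⊕g completeUnion n 2)) ∧
      commCharpoly (QuaternionGroup n) =
        (X + 1) ^ (3 * n - 3) * (X - 1) ^ n * (X - C (2 * (n : ℝ) - 3)) := by
  have : NeZero n := ⟨by omega⟩
  obtain ⟨e⟩ := QuaternionGroup.nonempty_commGraph_iso hn
  refine ⟨⟨e⟩, ?_⟩
  classical
  have : NeZero (2 * n - 2) := ⟨by omega⟩
  rw [commCharpoly_eq_charpoly_adjMatrix, SimpleGraph.charpoly_adjMatrix_eq_of_iso e,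
    SimpleGraph.adjMatrix_sum, Matrix.charpoly_fromBlocks_zero₁₂,
    SimpleGraph.charpoly_adjMatrix_top, charpoly_adjMatrix_completeUnion, Fintype.card_fin]
  have hK₂ : (X + 1) ^ (2 - 1) * (X - C (((2 : ℕ) : ℝ) - 1)) = (X + 1) * (X - 1) := by norm_num
  have hclique : ((2 * n - 2 : ℕ) : ℝ) - 1 = 2 * n - 3 := by
    rw [Nat.cast_sub (by omega)]; push_cast; ring
  rw [hK₂, mul_pow, hclique, show 3 * n - 3 = (2 * n - 2 - 1) + n by omega, pow_add]
  ring
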